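/- Let A be a nonnegative d×d matrix with associated directed graph. Then A has spectral radius strictly less than 1 if and only if for every vertex i₀ ∈ [d], the sum of walk weights over all walks from i₀ to i₀ is finite: ∑_{w ∈ W^{(i₀,i₀)}} |w| < ∞. -/

import Mathlib

/-!
Expanding `(A ^ n) i i` over closed walks of length `n` shows that all closed-walk sums are
finite iff `∑ n, tr (A ^ n) < ∞`. Splitting `ℂ^d` into the generalized eigenspaces of `A`
gives `tr (A ^ n) = ∑ μ, m μ * μ ^ n`, the sum running over the spectrum with multiplicities
`m μ ≥ 1`. Such an exponential polynomial is summable iff every `‖μ‖ < 1`: one direction is the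
geometric series; for the other, the linear recurrence whose characteristic polynomial vanishes
at every eigenvalue but `μ₀` turns the summable sequence into `m μ₀ * p(μ₀) * μ₀ ^ n`, which
must therefore tend to `0`.
-/

open scoped ENNReal

/-- `k` (a sequence of `g+1` vertices) is a walk of length `g` in the directed graph
with edges `{(i,j) : 0 < A i j}`. -/
def IsWalk {d : ℕ} (A : Matrix (Fin d) (Fin d) ℝ) {g : ℕ} (k : Fin (g + 1) → Fin d) : Prop :=
  ∀ l : Fin g, 0 < A (k l.castSucc) (k l.succ)

/-- The weight of a walk: the product of matrix entries along its edges. -/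
def walkWeight {d : ℕ} (A : Matrix (Fin d) (Fin d) ℝ) {g : ℕ} (k : Fin (g + 1) → Fin d) : ℝ :=
  ∏ l : Fin g, A (k l.castSucc) (k l.succ)

/-- Total weight (in `[0,∞]`) of all walks (of all lengths `g ≥ 0`) from `i` to `j`. -/
noncomputable def walkSum {d : ℕ} (A : Matrix (Fin d) (Fin d) ℝ) (i j : Fin d) : ℝ≥0∞ :=
  ∑' w : {w : (g : ℕ) × (Fin (g + 1) → Fin d) //
      IsWalk A w.2 ∧ w.2 0 = i ∧ w.2 (Fin.last w.1) = j},
    ENNReal.ofReal (walkWeight A w.1.2)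

open Filter Topology Polynomial Finset Module

section ExpPoly

variable {𝕜 : Type*} [NormedField 𝕜]

lemma sum_coeff_mul_sum_mul_pow_add (p : 𝕜[X]) (s : Finset 𝕜) (c : 𝕜 → 𝕜) (n : ℕ) :
    ∑ k ∈ range (p.natDegree + 1), p.coeff k * ∑ μ ∈ s, c μ * μ ^ (n + k) =
      ∑ μ ∈ s, c μ * p.eval μ * μ ^ n := by
  simp_rw [mul_sum, eval_eq_sum_range, mul_sum, sum_mul]
  rw [sum_comm]
  exact sum_congr rfl fun μ _ => sum_congr rfl fun k _ => by ring

lemma norm_lt_one_of_tendsto_sum_mul_pow {s : Finset 𝕜} {c : 𝕜 → 𝕜}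
    (h : Tendsto (fun n => ∑ μ ∈ s, c μ * μ ^ n) atTop (𝓝 0)) {μ₀ : 𝕜} (hμ₀ : μ₀ ∈ s)
    (hc : c μ₀ ≠ 0) : ‖μ₀‖ < 1 := by
  classical
  set p : 𝕜[X] := ∏ μ ∈ s.erase μ₀, (X - C μ)
  have hp : p.eval μ₀ ≠ 0 := by
    simp only [p, eval_prod, eval_sub, eval_X, eval_C, prod_ne_zero_iff, mem_erase]
    exact fun μ ⟨hμ, _⟩ => sub_ne_zero.mpr (Ne.symm hμ)
  have hroots : ∀ μ ∈ s, μ ≠ μ₀ → p.eval μ = 0 := fun μ hμ hne => by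
    simp only [p, eval_prod, eval_sub, eval_X, eval_C]
    exact prod_eq_zero (mem_erase.mpr ⟨hne, hμ⟩) (sub_self μ)
  have hisolated : Tendsto (fun n => c μ₀ * p.eval μ₀ * μ₀ ^ n) atTop (𝓝 0) := by
    have := tendsto_finsetSum (range (p.natDegree + 1)) fun k _ =>
      (h.comp (tendsto_add_atTop_nat k)).const_mul (p.coeff k)
    simp only [Function.comp_def, mul_zero, sum_const_zero] at this
    refine this.congr fun n => ?_
    rw [sum_coeff_mul_sum_mul_pow_add, sum_eq_single μ₀ (fun μ hμ hne => by
      rw [hroots μ hμ hne, mul_zero, zero_mul]) (fun h => absurd hμ₀ h)]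
  have := hisolated.const_mul (c μ₀ * p.eval μ₀)⁻¹
  simp_rw [inv_mul_cancel_left₀ (mul_ne_zero hc hp), mul_zero] at this
  exact tendsto_pow_atTop_nhds_zero_iff_norm_lt_one.mp this

lemma summable_sum_mul_pow_iff [CompleteSpace 𝕜] {s : Finset 𝕜} {c : 𝕜 → 𝕜}
    (hc : ∀ μ ∈ s, c μ ≠ 0) :
    Summable (fun n => ∑ μ ∈ s, c μ * μ ^ n) ↔ ∀ μ ∈ s, ‖μ‖ < 1 :=
  ⟨fun h _ hμ => norm_lt_one_of_tendsto_sum_mul_pow h.tendsto_atTop_zero hμ (hc _ hμ),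
    fun h => summable_sum fun μ hμ => (summable_geometric_of_norm_lt_one (h μ hμ)).mul_left _⟩

end ExpPoly

namespace Module.End

variable {K V : Type*} [Field K] [AddCommGroup V] [Module K V] [FiniteDimensional K V]

lemma trace_restrict_maxGenEigenspace_pow (f : End K V) (μ : K) (n : ℕ) :
    LinearMap.trace K _ ((f ^ n).restrict
        (f.mapsTo_maxGenEigenspace_of_comm ((Commute.refl f).pow_right n) μ)) =
      finrank K (f.maxGenEigenspace μ) * μ ^ n := by
  set hf := f.mapsTo_maxGenEigenspace_of_comm (Commute.refl f) μ
  rw [← pow_restrict n hf]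
  induction n with
  | zero => simp
  | succ n ih =>
    rw [pow_succ, mul_eq_comp, LinearMap.trace_comp_eq_mul_of_commute_of_isNilpotent μ
      ((Commute.refl _).pow_left n) (f.isNilpotent_restrict_maxGenEigenspace_sub_algebraMap μ),
      ih, pow_succ]
    ring

lemma maxGenEigenspace_ne_bot_iff_mem_spectrum {f : End K V} {μ : K} :
    f.maxGenEigenspace μ ≠ ⊥ ↔ μ ∈ spectrum K f :=
  (hasUnifEigenvalue_iff_hasUnifEigenvalue_one (by simp)).trans hasUnifEigenvalue_iff_mem_spectrum

lemma finrank_maxGenEigenspace_ne_zero {f : End K V} {μ : K} (hμ : μ ∈ spectrum K f) :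
    finrank K (f.maxGenEigenspace μ) ≠ 0 :=
  mt Submodule.finrank_eq_zero.mp (maxGenEigenspace_ne_bot_iff_mem_spectrum.mpr hμ)

lemma trace_pow_eq_sum [IsAlgClosed K] (f : End K V) (n : ℕ) :
    LinearMap.trace K V (f ^ n) =
      ∑ μ ∈ f.finite_spectrum.toFinset, finrank K (f.maxGenEigenspace μ) * μ ^ n := by
  classical
  have hint := DirectSum.isInternal_submodule_of_iSupIndep_of_iSup_eq_top
    f.independent_maxGenEigenspace f.iSup_maxGenEigenspace_eq_top
  have hfin : {μ | f.maxGenEigenspace μ ≠ ⊥}.Finite :=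
    WellFoundedGT.finite_ne_bot_of_iSupIndep f.independent_maxGenEigenspace
  rw [LinearMap.trace_eq_sum_trace_restrict' hint hfin fun μ =>
    f.mapsTo_maxGenEigenspace_of_comm ((Commute.refl f).pow_right n) μ]
  refine Finset.sum_congr ?_ fun μ _ => trace_restrict_maxGenEigenspace_pow f μ n
  ext μ
  simp [maxGenEigenspace_ne_bot_iff_mem_spectrum]

end Module.End

lemma Fin.sum_univ_fun_succ {α M : Type*} [Fintype α] [AddCommMonoid M] {n : ℕ}
    (F : (Fin (n + 1) → α) → M) :
    ∑ k, F k = ∑ a, ∑ k : Fin n → α, F (Fin.cons a k) := by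
  rw [← (Fin.consEquiv fun _ => α).sum_comp, Fintype.sum_prod_type]
  rfl

lemma ENNReal.tsum_ofReal_ne_top_iff {α : Type*} {f : α → ℝ} (hf : ∀ a, 0 ≤ f a) :
    ∑' a, ENNReal.ofReal (f a) ≠ ⊤ ↔ Summable f := by
  lift f to α → NNReal using hf
  simp [ENNReal.tsum_coe_ne_top_iff_summable, NNReal.summable_coe]

section Walks

variable {d : ℕ}

lemma walkWeight_cons (A : Matrix (Fin d) (Fin d) ℝ) {g : ℕ} (m : Fin d)
    (k : Fin (g + 1) → Fin d) :
    walkWeight A (Fin.cons m k : Fin (g + 2) → Fin d) = A m (k 0) * walkWeight A k := by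
  rw [walkWeight, Fin.prod_univ_succ]
  rfl

lemma pow_apply_eq_sum_walkWeight (A : Matrix (Fin d) (Fin d) ℝ) (n : ℕ) (i j : Fin d) :
    (A ^ n) i j = ∑ k : Fin (n + 1) → Fin d with k 0 = i ∧ k (Fin.last n) = j,
      walkWeight A k := by
  induction n generalizing i with
  | zero =>
    rw [pow_zero, Matrix.one_apply, sum_filter, ← (Equiv.funUnique (Fin 1) (Fin d)).symm.sum_comp]
    simp only [walkWeight, Finset.univ_eq_empty, prod_empty]
    simp [ite_and, eq_comm]
  | succ n ih =>
    rw [pow_succ', Matrix.mul_apply, sum_filter, Fin.sum_univ_fun_succ]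
    simp_rw [ih, sum_filter, mul_sum]
    rw [sum_comm]
    simp [← Fin.succ_last, ite_and, walkWeight_cons]

section Nonneg

variable {A : Matrix (Fin d) (Fin d) ℝ} (hA : ∀ i j, 0 ≤ A i j)
include hA

lemma walkWeight_eq_zero_of_not_isWalk {g : ℕ} {k : Fin (g + 1) → Fin d} (h : ¬IsWalk A k) :
    walkWeight A k = 0 := by
  obtain ⟨l, hl⟩ := not_forall.mp h
  exact prod_eq_zero (mem_univ l) ((hA _ _).antisymm (not_lt.mp hl)).symm

lemma walkWeight_nonneg {g : ℕ} (k : Fin (g + 1) → Fin d) : 0 ≤ walkWeight A k :=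
  prod_nonneg fun _ _ => hA _ _

lemma walkSum_eq_tsum_pow_apply (i j : Fin d) :
    walkSum A i j = ∑' n, ENNReal.ofReal ((A ^ n) i j) := by
  have hdrop : walkSum A i j = ∑' w : (g : ℕ) × (Fin (g + 1) → Fin d),
      if w.2 0 = i ∧ w.2 (Fin.last w.1) = j then ENNReal.ofReal (walkWeight A w.2) else 0 := by
    refine (_root_.tsum_subtype {w : (g : ℕ) × (Fin (g + 1) → Fin d) | _}
      fun w => ENNReal.ofReal (walkWeight A w.2)).trans (tsum_congr fun w => ?_)
    by_cases hw : IsWalk A w.2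
    · simp only [Set.indicator, Set.mem_ofPred_eq, hw, true_and]
    · simp [Set.indicator, hw, walkWeight_eq_zero_of_not_isWalk hA hw]
  rw [hdrop, ENNReal.tsum_sigma']
  refine tsum_congr fun n => ?_
  rw [tsum_fintype, pow_apply_eq_sum_walkWeight, sum_filter, ENNReal.ofReal_sum_of_nonneg]
  · simp only [apply_ite ENNReal.ofReal, ENNReal.ofReal_zero]
  · exact fun k _ => by split_ifs <;> simp [walkWeight_nonneg hA]

lemma forall_walkSum_self_ne_top_iff_summable_trace :
    (∀ i, walkSum A i i ≠ ⊤) ↔ Summable fun n => (A ^ n).trace := by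
  have hdiag : ∀ n, ENNReal.ofReal (A ^ n).trace = ∑ i, ENNReal.ofReal ((A ^ n) i i) :=
    fun n => ENNReal.ofReal_sum_of_nonneg fun i _ => Matrix.pow_apply_nonneg hA n i i
  rw [← ENNReal.tsum_ofReal_ne_top_iff (f := fun n => (A ^ n).trace)
      fun n => sum_nonneg fun i _ => Matrix.pow_apply_nonneg hA n i i,
    tsum_congr hdiag, Summable.tsum_finsetSum fun _ _ => ENNReal.summable, ENNReal.sum_ne_top]
  simp [walkSum_eq_tsum_pow_apply hA]

end Nonneg

end Walks

lemma Matrix.trace_map_pow {R S n : Type*} [CommSemiring R] [CommSemiring S] [Fintype n]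
    [DecidableEq n] (f : R →+* S) (A : Matrix n n R) (k : ℕ) :
    f (A ^ k).trace = (A.map f ^ k).trace := by
  rw [← RingHom.mapMatrix_apply, ← map_pow, RingHom.mapMatrix_apply, AddMonoidHom.map_trace]

namespace Matrix

variable {K n : Type*} [Field K] [Fintype n] [DecidableEq n]

lemma finrank_maxGenEigenspace_toLin'_ne_zero {B : Matrix n n K} {μ : K}
    (hμ : μ ∈ spectrum K B) : finrank K (End.maxGenEigenspace (toLin' B) μ) ≠ 0 :=
  End.finrank_maxGenEigenspace_ne_zero (by rwa [spectrum_toLin'])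

lemma trace_pow_eq_sum [IsAlgClosed K] (B : Matrix n n K) (k : ℕ) :
    (B ^ k).trace =
      ∑ μ ∈ B.finite_spectrum.toFinset, finrank K (End.maxGenEigenspace (toLin' B) μ) * μ ^ k := by
  rw [← trace_toLin'_eq, toLin'_pow, End.trace_pow_eq_sum]
  exact sum_congr (by ext; simp [spectrum_toLin']) fun _ _ => rfl

end Matrix

/-- Graph-theoretic subcriticality criterion: a nonnegative matrix `A` has spectral
radius strictly less than 1 iff for every vertex `i0` the total weight of walks from
`i0` back to `i0` is finite. -/
theorem spectral_radius_lt_one_iff_walkSums_finite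
    (d : ℕ) (A : Matrix (Fin d) (Fin d) ℝ) (hA : ∀ i j, 0 ≤ A i j) :
    (∀ μ ∈ spectrum ℂ (A.map (algebraMap ℝ ℂ)), ‖μ‖ < 1) ↔
      ∀ i0 : Fin d, walkSum A i0 i0 ≠ ⊤ := by
  set B := A.map (algebraMap ℝ ℂ)
  have htrace : ∀ n, (((A ^ n).trace : ℝ) : ℂ) =
      ∑ μ ∈ B.finite_spectrum.toFinset,
        (finrank ℂ (End.maxGenEigenspace (Matrix.toLin' B) μ) : ℂ) * μ ^ n := fun n => by
    rw [← Matrix.trace_pow_eq_sum, ← Matrix.trace_map_pow, Complex.coe_algebraMap]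
  rw [forall_walkSum_self_ne_top_iff_summable_trace hA, ← Complex.summable_ofReal,
    funext htrace, summable_sum_mul_pow_iff fun μ hμ => Nat.cast_ne_zero.mpr
      (Matrix.finrank_maxGenEigenspace_toLin'_ne_zero (B.finite_spectrum.mem_toFinset.mp hμ))]
  simp
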